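/- arXiv:1105.2401 — 10 statements merged into one kernel-verified Lean document; each statement's English description precedes it below -/
import Mathlib

section
/- Let (X,d,≤) be an ordered metric space such that d is complete and T : X → X is (d,≤)-contractive. Assume: (a03) there exists x ∈ X with x <> Tx; (a04) T is monotone (increasing or decreasing); (a05) for each x,y ∈ X the pair {x,y} has a lower bound and an upper bound in X; (a06) every <>-ascending sequence (x_n) that d-converges to x has a subsequence (x_{q(n)}) with x_{q(n)} <> x for all n. Then T is a Picard operator (modulo d): for every x ∈ X the orbit (T^n x) d-converges to a fixed point of T, and the fixed point set of T is a singleton. -/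
/-!
Write `x ~ y` for `x ≤ y ∨ y ≤ x`. Monotonicity makes `T` preserve `~`, so for `x₀ ~ T x₀` all
consecutive points of the orbit of `x₀` are comparable and it is Cauchy with geometric rate; its
limit `z` is comparable with infinitely many orbit points, along which `T` is contractive, so
`T z = z`. Any `x` shares an upper bound `v` with `z`; both `T^[n] x` and `z = T^[n] z` are within
`αⁿ`-multiples of `T^[n] v`, hence every orbit converges to `z`, and a fixed point, being its own
orbit limit, equals `z`.
-/

open Filter Topology Function Relation

theorem Relation.SymmGen.map_of_monotone_or_antitone {α β : Type*} [Preorder α] [Preorder β]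
    {f : α → β} (hf : Monotone f ∨ Antitone f) {a b : α} (h : SymmGen (· ≤ ·) a b) :
    SymmGen (· ≤ ·) (f a) (f b) := by
  rcases hf with hf | hf <;> rcases h with h | h
  exacts [.of_le (hf h), .of_ge (hf h), .of_ge (hf h), .of_le (hf h)]

theorem Relation.SymmGen.dist_map_le {X : Type*} [PseudoMetricSpace X] [LE X] {T : X → X}
    {α : ℝ} (hT : ∀ x y : X, x ≤ y → dist (T x) (T y) ≤ α * dist x y) {x y : X}
    (h : SymmGen (· ≤ ·) x y) : dist (T x) (T y) ≤ α * dist x y := by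
  rcases h with h | h
  · exact hT x y h
  · simpa only [dist_comm] using hT y x h

section RelContraction

variable {X : Type*} {r : X → X → Prop} {T : X → X}

theorem iterate_rel (hr : ∀ x y, r x y → r (T x) (T y)) {x y : X} (h : r x y) (n : ℕ) :
    r (T^[n] x) (T^[n] y) := by
  induction n with
  | zero => exact h
  | succ n ih => simpa only [iterate_succ_apply'] using hr _ _ ih

variable [PseudoMetricSpace X] {α : ℝ}
  (hr : ∀ x y, r x y → r (T x) (T y)) (hd : ∀ x y, r x y → dist (T x) (T y) ≤ α * dist x y)
include hr hd

theorem dist_iterate_le_of_rel (hα : 0 ≤ α) {x y : X} (h : r x y) (n : ℕ) :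
    dist (T^[n] x) (T^[n] y) ≤ α ^ n * dist x y := by
  induction n with
  | zero => simp
  | succ n ih =>
    calc dist (T^[n + 1] x) (T^[n + 1] y)
        ≤ α * dist (T^[n] x) (T^[n] y) := by
          simpa only [iterate_succ_apply'] using hd _ _ (iterate_rel hr h n)
      _ ≤ α * (α ^ n * dist x y) := by gcongr
      _ = α ^ (n + 1) * dist x y := by ring

theorem cauchySeq_iterate_of_rel (hα0 : 0 ≤ α) (hα1 : α < 1) {x : X} (h : r x (T x)) :
    CauchySeq fun n => T^[n] x :=
  cauchySeq_of_le_geometric α (dist x (T x)) hα1 fun n =>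
    (dist_iterate_le_of_rel hr hd hα0 h n).trans_eq (mul_comm _ _)

theorem tendsto_iterate_of_rel_of_isFixedPt (hα0 : 0 ≤ α) (hα1 : α < 1) {x v z : X}
    (hz : IsFixedPt T z) (hxv : r x v) (hzv : r z v) :
    Tendsto (fun n => T^[n] x) atTop (𝓝 z) := by
  rw [tendsto_iff_dist_tendsto_zero]
  have hbound (n : ℕ) : dist (T^[n] x) z ≤ α ^ n * dist x v + α ^ n * dist z v := by
    calc dist (T^[n] x) z ≤ dist (T^[n] x) (T^[n] v) + dist (T^[n] z) (T^[n] v) := by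
          rw [hz.iterate n, dist_comm z]; exact dist_triangle _ _ _
      _ ≤ _ := add_le_add (dist_iterate_le_of_rel hr hd hα0 hxv n)
          (dist_iterate_le_of_rel hr hd hα0 hzv n)
  have hpow := tendsto_pow_atTop_nhds_zero_of_lt_one hα0 hα1
  refine squeeze_zero (fun _ => dist_nonneg) hbound ?_
  simpa using (hpow.mul_const (dist x v)).add (hpow.mul_const (dist z v))

end RelContraction

theorem isFixedPt_of_tendsto_iterate_of_rel {X : Type*} [MetricSpace X] {r : X → X → Prop}
    {T : X → X} {α : ℝ} (hd : ∀ x y, r x y → dist (T x) (T y) ≤ α * dist x y) {x z : X}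
    (hz : Tendsto (fun n => T^[n] x) atTop (𝓝 z)) {q : ℕ → ℕ} (hq : StrictMono q)
    (hqz : ∀ n, r (T^[q n] x) z) : IsFixedPt T z := by
  have hsub := tendsto_iff_dist_tendsto_zero.1 (hz.comp hq.tendsto_atTop)
  have hTz : Tendsto (fun n => T (T^[q n] x)) atTop (𝓝 (T z)) :=
    tendsto_iff_dist_tendsto_zero.2 <| squeeze_zero (fun _ => dist_nonneg)
      (fun n => hd _ _ (hqz n)) (by simpa using hsub.const_mul α)
  have hz' : Tendsto (fun n => T (T^[q n] x)) atTop (𝓝 z) := by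
    simpa only [comp_def, ← iterate_succ_apply'] using
      hz.comp ((tendsto_add_atTop_nat 1).comp hq.tendsto_atTop)
  exact tendsto_nhds_unique hTz hz'

/-- Nieto–Rodriguez-Lopez theorem (comparison version). -/
theorem nieto_lopez_a06 {X : Type*} [MetricSpace X] [PartialOrder X] [CompleteSpace X]
    (T : X → X) (α : ℝ) (hα0 : 0 < α) (hα1 : α < 1)
    (hcontr : ∀ x y : X, x ≤ y → dist (T x) (T y) ≤ α * dist x y)
    (ha03 : ∃ x : X, x ≤ T x ∨ T x ≤ x)
    (ha04 : (∀ x y : X, x ≤ y → T x ≤ T y) ∨ (∀ x y : X, x ≤ y → T y ≤ T x))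
    (ha05 : ∀ x y : X, (∃ u : X, u ≤ x ∧ u ≤ y) ∧ (∃ v : X, x ≤ v ∧ y ≤ v))
    (ha06 : ∀ (x : ℕ → X) (l : X),
      (∀ n, x n ≤ x (n + 1) ∨ x (n + 1) ≤ x n) →
      Tendsto x atTop (𝓝 l) →
      ∃ q : ℕ → ℕ, StrictMono q ∧ ∀ n, x (q n) ≤ l ∨ l ≤ x (q n)) :
    (∀ x : X, ∃ z : X, Tendsto (fun n => T^[n] x) atTop (𝓝 z) ∧ T z = z) ∧
      (∃! z : X, T z = z) := by
  have hr (x y : X) : SymmGen (· ≤ ·) x y → SymmGen (· ≤ ·) (T x) (T y) :=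
    SymmGen.map_of_monotone_or_antitone ha04
  have hd (x y : X) : SymmGen (· ≤ ·) x y → dist (T x) (T y) ≤ α * dist x y :=
    SymmGen.dist_map_le hcontr
  obtain ⟨x₀, hx₀⟩ := ha03
  obtain ⟨z, hz⟩ := cauchySeq_tendsto_of_complete (cauchySeq_iterate_of_rel hr hd hα0.le hα1 hx₀)
  obtain ⟨q, hq, hqz⟩ := ha06 _ z (iterate_rel hr hx₀) hz
  have hTz : IsFixedPt T z := isFixedPt_of_tendsto_iterate_of_rel hd hz hq hqz
  have hconv (x : X) : Tendsto (fun n => T^[n] x) atTop (𝓝 z) := by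
    obtain ⟨v, hxv, hzv⟩ := (ha05 x z).2
    exact tendsto_iterate_of_rel_of_isFixedPt hr hd hα0.le hα1 hTz (.of_le hxv) (.of_le hzv)
  refine ⟨fun x => ⟨z, hconv x, hTz⟩, z, hTz, fun y hy => ?_⟩
  simpa [iterate_fixed hy] using hconv y
end

section
/- Let (X,d,≤) be an ordered metric space such that d is complete and T : X → X is (d,≤)-contractive. Assume: (a03) there exists x ∈ X with x <> Tx; (a04) T is monotone (increasing or decreasing); (a05) for each x,y ∈ X the pair {x,y} has a lower bound and an upper bound in X; and (a07) T is d-continuous, i.e. x_n → x (in d) implies Tx_n → Tx. Then T is a Picard operator (modulo d): for every x ∈ X the orbit (T^n x) d-converges to a fixed point of T, and the fixed point set of T is a singleton. -/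
/-!
Comparability is preserved by a monotone or antitone `T`, so the contraction estimate iterates
along comparable pairs: `dist (T^[n] x) (T^[n] y) ≤ α ^ n * dist x y`. Since any two points have a
common upper bound `v`, going through `v` gives `dist (T^[n] x) (T^[n] y) → 0` for all `x, y`.
Taking `y = T x` makes every orbit geometrically Cauchy, continuity makes its limit a fixed point,
and two fixed points are at distance `dist (T^[n] z) (T^[n] w) → 0`, hence equal.
-/

open Filter Topology Function Relation

section

variable {X : Type*} [PartialOrder X] {T : X → X} {α : ℝ} {x y v : X}

theorem symmGen_le_apply (hT : Monotone T ∨ Antitone T) (h : SymmGen (· ≤ ·) x y) :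
    SymmGen (· ≤ ·) (T x) (T y) := by
  rcases hT with hT | hT <;> rcases h with h | h
  exacts [.of_le (hT h), .of_ge (hT h), .of_ge (hT h), .of_le (hT h)]

theorem symmGen_le_iterate (hT : Monotone T ∨ Antitone T) (h : SymmGen (· ≤ ·) x y) (n : ℕ) :
    SymmGen (· ≤ ·) (T^[n] x) (T^[n] y) := by
  induction n with
  | zero => exact h
  | succ n ih =>
    rw [iterate_succ_apply', iterate_succ_apply']
    exact symmGen_le_apply hT ih

variable [PseudoMetricSpace X]

theorem dist_iterate_le_of_symmGen (hα : 0 ≤ α)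
    (hcontr : ∀ x y : X, x ≤ y → dist (T x) (T y) ≤ α * dist x y)
    (hT : Monotone T ∨ Antitone T) (h : SymmGen (· ≤ ·) x y) (n : ℕ) :
    dist (T^[n] x) (T^[n] y) ≤ α ^ n * dist x y := by
  induction n with
  | zero => simp
  | succ n ih =>
    have hstep : dist (T (T^[n] x)) (T (T^[n] y)) ≤ α * dist (T^[n] x) (T^[n] y) := by
      rcases symmGen_le_iterate hT h n with hle | hle
      · exact hcontr _ _ hle
      · rw [dist_comm, dist_comm (T^[n] x)]
        exact hcontr _ _ hle
    calc dist (T^[n + 1] x) (T^[n + 1] y)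
        = dist (T (T^[n] x)) (T (T^[n] y)) := by rw [iterate_succ_apply', iterate_succ_apply']
      _ ≤ α * (α ^ n * dist x y) := hstep.trans (mul_le_mul_of_nonneg_left ih hα)
      _ = α ^ (n + 1) * dist x y := by ring

theorem dist_iterate_le_of_le_of_le (hα : 0 ≤ α)
    (hcontr : ∀ x y : X, x ≤ y → dist (T x) (T y) ≤ α * dist x y)
    (hT : Monotone T ∨ Antitone T) (hx : x ≤ v) (hy : y ≤ v) (n : ℕ) :
    dist (T^[n] x) (T^[n] y) ≤ α ^ n * (dist x v + dist v y) :=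
  calc dist (T^[n] x) (T^[n] y) ≤ dist (T^[n] x) (T^[n] v) + dist (T^[n] v) (T^[n] y) :=
        dist_triangle _ _ _
    _ ≤ α ^ n * dist x v + α ^ n * dist v y :=
        add_le_add (dist_iterate_le_of_symmGen hα hcontr hT (.of_le hx) n)
          (dist_iterate_le_of_symmGen hα hcontr hT (.of_ge hy) n)
    _ = α ^ n * (dist x v + dist v y) := by ring

variable [IsDirected X (· ≤ ·)]

theorem cauchySeq_iterate (hα0 : 0 ≤ α) (hα1 : α < 1)
    (hcontr : ∀ x y : X, x ≤ y → dist (T x) (T y) ≤ α * dist x y)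
    (hT : Monotone T ∨ Antitone T) (x : X) :
    CauchySeq fun n => T^[n] x := by
  obtain ⟨v, hxv, hTxv⟩ := directed_of (· ≤ ·) x (T x)
  refine cauchySeq_of_le_geometric α (dist x v + dist v (T x)) hα1 fun n => ?_
  rw [iterate_succ_apply, mul_comm]
  exact dist_iterate_le_of_le_of_le hα0 hcontr hT hxv hTxv n

theorem tendsto_dist_iterate_zero (hα0 : 0 ≤ α) (hα1 : α < 1)
    (hcontr : ∀ x y : X, x ≤ y → dist (T x) (T y) ≤ α * dist x y)
    (hT : Monotone T ∨ Antitone T) (x y : X) :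
    Tendsto (fun n => dist (T^[n] x) (T^[n] y)) atTop (𝓝 0) := by
  obtain ⟨v, hxv, hyv⟩ := directed_of (· ≤ ·) x y
  have hgeom : Tendsto (fun n => α ^ n * (dist x v + dist v y)) atTop (𝓝 0) := by
    simpa using (tendsto_pow_atTop_nhds_zero_of_lt_one hα0 hα1).mul_const (dist x v + dist v y)
  exact squeeze_zero (fun _ => dist_nonneg)
    (dist_iterate_le_of_le_of_le hα0 hcontr hT hxv hyv) hgeom

end

section

variable {X : Type*} [MetricSpace X] [PartialOrder X] [IsDirected X (· ≤ ·)] {T : X → X} {α : ℝ}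

theorem exists_tendsto_iterate_isFixedPt [CompleteSpace X] (hα0 : 0 ≤ α) (hα1 : α < 1)
    (hcontr : ∀ x y : X, x ≤ y → dist (T x) (T y) ≤ α * dist x y)
    (hT : Monotone T ∨ Antitone T) (hcont : Continuous T) (x : X) :
    ∃ z, Tendsto (fun n => T^[n] x) atTop (𝓝 z) ∧ IsFixedPt T z := by
  obtain ⟨z, hz⟩ := cauchySeq_tendsto_of_complete (cauchySeq_iterate hα0 hα1 hcontr hT x)
  exact ⟨z, hz, isFixedPt_of_tendsto_iterate hz hcont.continuousAt⟩

theorem subsingleton_fixedPoints (hα0 : 0 ≤ α) (hα1 : α < 1)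
    (hcontr : ∀ x y : X, x ≤ y → dist (T x) (T y) ≤ α * dist x y)
    (hT : Monotone T ∨ Antitone T) : (fixedPoints T).Subsingleton := by
  intro z hz w hw
  have hconst : (fun n => dist (T^[n] z) (T^[n] w)) = fun _ => dist z w :=
    funext fun n => by rw [(IsFixedPt.iterate hz n).eq, (IsFixedPt.iterate hw n).eq]
  have h := tendsto_dist_iterate_zero hα0 hα1 hcontr hT z w
  rw [hconst, tendsto_const_nhds_iff] at h
  exact dist_eq_zero.mp h

end

/-- Ran–Reurings theorem: the continuity version of the
Nieto–Rodriguez-Lopez fixed point result. -/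
theorem ran_reurings_a07 {X : Type*} [MetricSpace X] [PartialOrder X] [CompleteSpace X]
    (T : X → X) (α : ℝ) (hα0 : 0 < α) (hα1 : α < 1)
    (hcontr : ∀ x y : X, x ≤ y → dist (T x) (T y) ≤ α * dist x y)
    (ha03 : ∃ x : X, x ≤ T x ∨ T x ≤ x)
    (ha04 : (∀ x y : X, x ≤ y → T x ≤ T y) ∨ (∀ x y : X, x ≤ y → T y ≤ T x))
    (ha05 : ∀ x y : X, (∃ u : X, u ≤ x ∧ u ≤ y) ∧ (∃ v : X, x ≤ v ∧ y ≤ v))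
    (ha07 : ∀ (x : ℕ → X) (l : X), Tendsto x atTop (𝓝 l) →
      Tendsto (fun n => T (x n)) atTop (𝓝 (T l))) :
    (∀ x : X, ∃ z : X, Tendsto (fun n => T^[n] x) atTop (𝓝 z) ∧ T z = z) ∧
      (∃! z : X, T z = z) := by
  have hT : Monotone T ∨ Antitone T := ha04.imp (fun h x y => h x y) (fun h x y => h x y)
  have : IsDirected X (· ≤ ·) := ⟨fun x y => (ha05 x y).2⟩
  have hcont : Continuous T := SeqContinuous.continuous ha07
  have horbit := exists_tendsto_iterate_isFixedPt hα0.le hα1 hcontr hT hcont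
  obtain ⟨x₀, -⟩ := ha03
  obtain ⟨z, -, hz⟩ := horbit x₀
  exact ⟨horbit, z, hz, fun w hw => subsingleton_fixedPoints hα0.le hα1 hcontr hT hw hz⟩
end

section
/- Let (X,d,≤) be an ordered metric space satisfying (b03): for every x,y ∈ X there exists a <>-chain between x and y. Define e(x,y) = inf{ d(z_1,z_2)+…+d(z_{k−1},z_k) : z_1,…,z_k is a <>-chain between x and y }. Then: (i) e is a metric on X (e(x,x)=0, e is symmetric, e satisfies the triangle inequality, and e(x,y)=0 implies x=y); (ii) d(x,y) ≤ e(x,y) for all x,y ∈ X; (iii) e(x,y) = d(x,y) whenever x <> y. -/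
/-!
Chains compose by concatenation (sharing the middle point), which adds their lengths, and reverse
without changing their length; this gives the triangle inequality and symmetry of `e`. Along any
chain the triangle inequality for `d` gives `d(x,y) ≤` the chain's length, so `d ≤ e`, which makes
`e` definite; a comparable pair is itself a chain of length `d(x,y)`.
-/

/-- A `<>`-chain between `x` and `y`: a finite list `z₁,…,z_k` (`k ≥ 2`) with
`z₁ = x`, `z_k = y`, and consecutive terms comparable. -/
def IsChainBetween {X : Type*} [PartialOrder X] (l : List X) (x y : X) : Prop :=
  2 ≤ l.length ∧ l.head? = some x ∧ l.getLast? = some y ∧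
    l.Chain' (fun a b : X => a ≤ b ∨ b ≤ a)

/-- The sum `d(z₁,z₂) + … + d(z_{k-1},z_k)` of consecutive distances along a list. -/
def chainLength {X : Type*} [MetricSpace X] (l : List X) : ℝ :=
  ((l.zip l.tail).map fun p => dist p.1 p.2).sum

/-- The chain metric `e(x,y)` — the infimum of lengths of `<>`-chains joining `x` to `y`. -/
noncomputable def chainDist {X : Type*} [MetricSpace X] [PartialOrder X] (x y : X) : ℝ :=
  sInf {s : ℝ | ∃ l : List X, IsChainBetween l x y ∧ s = chainLength l}

open scoped Pointwise

section ChainLength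

variable {X : Type*} [MetricSpace X]

@[simp]
lemma chainLength_singleton (a : X) : chainLength [a] = 0 := by
  simp [chainLength]

@[simp]
lemma chainLength_cons_cons (a b : X) (l : List X) :
    chainLength (a :: b :: l) = dist a b + chainLength (b :: l) := by
  simp [chainLength]

lemma chainLength_pair (a b : X) : chainLength [a, b] = dist a b := by
  simp

lemma chainLength_nonneg (l : List X) : 0 ≤ chainLength l :=
  List.sum_nonneg fun _ hs => by
    obtain ⟨p, -, rfl⟩ := List.mem_map.mp hs
    exact dist_nonneg

lemma dist_le_chainLength :
    ∀ {l : List X} {a b : X}, l.head? = some a → l.getLast? = some b →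
      dist a b ≤ chainLength l
  | [], _, _, ha, _ => by simp at ha
  | [c], a, b, ha, hb => by
      obtain rfl : c = a := by simpa using ha
      obtain rfl : c = b := by simpa using hb
      simp
  | c :: d :: l, a, b, ha, hb => by
      obtain rfl : c = a := by simpa using ha
      rw [List.getLast?_cons_cons] at hb
      rw [chainLength_cons_cons]
      linarith [dist_triangle c d b, dist_le_chainLength (l := d :: l) rfl hb]

lemma chainLength_append_cons :
    ∀ (l : List X) (a : X) (m : List X),
      chainLength (l ++ a :: m) = chainLength (l ++ [a]) + chainLength (a :: m)
  | [], _, _ => by simp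
  | [c], a, m => by simp
  | c :: d :: l, a, m => by
      simp only [List.cons_append, chainLength_cons_cons]
      rw [← List.cons_append, chainLength_append_cons (d :: l) a m, List.cons_append]
      ring

lemma chainLength_reverse : ∀ l : List X, chainLength l.reverse = chainLength l
  | [] => rfl
  | [_] => rfl
  | a :: b :: l => by
      have hrev : (a :: b :: l).reverse = l.reverse ++ b :: [a] := by simp
      rw [hrev, chainLength_append_cons, ← List.reverse_cons, chainLength_reverse (b :: l),
        chainLength_pair, chainLength_cons_cons, dist_comm]
      ring

end ChainLength

namespace IsChainBetween

variable {X : Type*} [PartialOrder X] {x y z : X}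

lemma pair (h : x ≤ y ∨ y ≤ x) : IsChainBetween [x, y] x y :=
  ⟨le_rfl, rfl, rfl, List.isChain_pair.mpr h⟩

lemma reverse {l : List X} (hl : IsChainBetween l x y) : IsChainBetween l.reverse y x := by
  obtain ⟨hlen, hhead, hlast, hchain⟩ := hl
  refine ⟨by simpa using hlen, by simpa using hlast, by simpa using hhead, ?_⟩
  exact List.isChain_reverse.mpr (hchain.imp fun _ _ h => h.symm)

lemma append {l m : List X} (hl : IsChainBetween (l ++ [y]) x y)
    (hm : IsChainBetween (y :: m) y z) : IsChainBetween (l ++ y :: m) x z := by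
  obtain ⟨hlen, hhead, -, hlchain⟩ := hl
  obtain ⟨hmlen, -, hmlast, hmchain⟩ := hm
  have hm_ne : m ≠ [] := by rintro rfl; simp at hmlen
  refine ⟨by simp at hlen ⊢; omega, ?_, ?_, ?_⟩
  · rwa [← List.singleton_append, ← List.append_assoc, List.head?_append_of_ne_nil _ (by simp)]
  · rwa [List.getLast?_append_of_ne_nil _ (List.cons_ne_nil _ _)]
  · rw [← List.singleton_append, ← List.append_assoc]
    exact hlchain.append_overlap hmchain (List.cons_ne_nil _ _)

end IsChainBetween

section ChainDist

variable {X : Type*} [MetricSpace X] [PartialOrder X] {x y z : X}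

def chainLengths (x y : X) : Set ℝ :=
  {s : ℝ | ∃ l : List X, IsChainBetween l x y ∧ s = chainLength l}

lemma chainDist_eq_sInf (x y : X) : chainDist x y = sInf (chainLengths x y) := rfl

lemma chainLengths_nonempty (h : ∃ l, IsChainBetween l x y) : (chainLengths x y).Nonempty :=
  let ⟨l, hl⟩ := h
  ⟨chainLength l, l, hl, rfl⟩

lemma bddBelow_chainLengths (x y : X) : BddBelow (chainLengths x y) :=
  ⟨0, by rintro _ ⟨l, -, rfl⟩; exact chainLength_nonneg l⟩

lemma chainDist_le_chainLength {l : List X} (hl : IsChainBetween l x y) :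
    chainDist x y ≤ chainLength l :=
  csInf_le (bddBelow_chainLengths x y) ⟨l, hl, rfl⟩

lemma dist_le_chainDist (h : ∃ l, IsChainBetween l x y) : dist x y ≤ chainDist x y :=
  le_csInf (chainLengths_nonempty h) <| by
    rintro _ ⟨l, ⟨-, hhead, hlast, -⟩, rfl⟩
    exact dist_le_chainLength hhead hlast

lemma chainDist_of_comparable (h : x ≤ y ∨ y ≤ x) : chainDist x y = dist x y :=
  le_antisymm (chainLength_pair x y ▸ chainDist_le_chainLength (.pair h))
    (dist_le_chainDist ⟨_, .pair h⟩)

lemma chainDist_self (x : X) : chainDist x x = 0 := by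
  rw [chainDist_of_comparable (Or.inl le_rfl), dist_self]

lemma chainLengths_comm (x y : X) : chainLengths x y = chainLengths y x := by
  suffices ∀ a b : X, chainLengths a b ⊆ chainLengths b a from (this x y).antisymm (this y x)
  rintro a b _ ⟨l, hl, rfl⟩
  exact ⟨l.reverse, hl.reverse, (chainLength_reverse l).symm⟩

lemma chainDist_comm (x y : X) : chainDist x y = chainDist y x := by
  rw [chainDist_eq_sInf, chainLengths_comm]
  rfl

lemma chainLengths_add_subset (x y z : X) :
    chainLengths x y + chainLengths y z ⊆ chainLengths x z := by
  rintro _ ⟨_, ⟨l, hl, rfl⟩, _, ⟨m, hm, rfl⟩, rfl⟩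
  obtain ⟨l', rfl⟩ := List.getLast?_eq_some_iff.mp hl.2.2.1
  obtain ⟨m', rfl⟩ := List.head?_eq_some_iff.mp hm.2.1
  exact ⟨l' ++ y :: m', hl.append hm, (chainLength_append_cons l' y m').symm⟩

lemma chainDist_triangle (hxy : ∃ l, IsChainBetween l x y) (hyz : ∃ l, IsChainBetween l y z) :
    chainDist x z ≤ chainDist x y + chainDist y z := by
  have hne_xy := chainLengths_nonempty hxy
  have hne_yz := chainLengths_nonempty hyz
  rw [chainDist_eq_sInf, chainDist_eq_sInf, chainDist_eq_sInf,
    ← csInf_add hne_xy (bddBelow_chainLengths x y) hne_yz (bddBelow_chainLengths y z)]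
  exact csInf_le_csInf (bddBelow_chainLengths x z) (hne_xy.add hne_yz)
    (chainLengths_add_subset x y z)

end ChainDist

/-- Under (b03), the chain function `e = chainDist` is a metric on `X`,
it majorizes `d`, and it agrees with `d` on comparable pairs. -/
theorem chainDist_is_metric {X : Type*} [MetricSpace X] [PartialOrder X]
    (hb03 : ∀ x y : X, ∃ l : List X, IsChainBetween l x y) :
    (∀ x : X, chainDist x x = 0) ∧
    (∀ x y : X, chainDist x y = chainDist y x) ∧
    (∀ x y z : X, chainDist x z ≤ chainDist x y + chainDist y z) ∧
    (∀ x y : X, chainDist x y = 0 → x = y) ∧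
    (∀ x y : X, dist x y ≤ chainDist x y) ∧
    (∀ x y : X, (x ≤ y ∨ y ≤ x) → chainDist x y = dist x y) :=
  ⟨chainDist_self, chainDist_comm,
    fun x y z => chainDist_triangle (hb03 x y) (hb03 y z),
    fun x y h => dist_le_zero.mp (h ▸ dist_le_chainDist (hb03 x y)),
    fun x y => dist_le_chainDist (hb03 x y),
    fun _ _ => chainDist_of_comparable⟩
end

section
/- Let (X,d) be a metric space with a quasi-order ≤, and T : X → X increasing (x ≤ y implies Tx ≤ Ty) and weakly conditional (G,<>)-contractive with constant α ∈ (0,1): for all x,y with x <> y, if (1/(1+α))·max{d(x,Tx), d(y,Tx)} ≤ d(x,y) then d(Tx,Ty) ≤ α·d(x,y). Then for every x ∈ X with x ≤ Tx, the orbit x_n = T^n x satisfies d(x_{n+1}, x_{n+2}) ≤ α·d(x_n, x_{n+1}) for all n; in particular (x_n) is a d-Cauchy sequence. -/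
/-!
Consecutive orbit points `x ≤ Tx` are comparable, and for the pair `(x, Tx)` the side condition
of the contraction reads `(1/(1+α)) · d(x, Tx) ≤ d(x, Tx)`, which always holds. So the contraction
applies along the orbit, the successive distances decay geometrically, and the orbit is Cauchy.
-/

open Function

theorem cauchySeq_of_dist_succ_le_mul {α : Type*} [PseudoMetricSpace α] {f : ℕ → α} {r : ℝ}
    (hr₀ : 0 ≤ r) (hr₁ : r < 1)
    (h : ∀ n, dist (f (n + 1)) (f (n + 2)) ≤ r * dist (f n) (f (n + 1))) : CauchySeq f :=
  cauchySeq_of_le_geometric r (dist (f 0) (f 1)) hr₁ fun n ↦ by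
    simpa only [mul_comm] using le_geom (u := fun n ↦ dist (f n) (f (n + 1))) hr₀ n fun k _ ↦ h k

theorem rel_iterate_succ {X : Type*} {r : X → X → Prop} {T : X → X}
    (hT : ∀ x y, r x y → r (T x) (T y)) {x : X} (hx : r x (T x)) (n : ℕ) :
    r (T^[n] x) (T^[n + 1] x) := by
  induction n with
  | zero => exact hx
  | succ n ih => simpa only [iterate_succ_apply'] using hT _ _ ih

/-- Weakly conditional `(G, <>)`-contractive with constant `α`, for `G t = 1 / (1 + t)`. -/
def IsWeaklyCondContractive {X : Type*} [PseudoMetricSpace X] (r : X → X → Prop) (T : X → X)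
    (α : ℝ) : Prop :=
  ∀ x y, (r x y ∨ r y x) →
    (1 / (1 + α)) * max (dist x (T x)) (dist y (T x)) ≤ dist x y →
    dist (T x) (T y) ≤ α * dist x y

namespace IsWeaklyCondContractive

variable {X : Type*} [PseudoMetricSpace X] {r : X → X → Prop} {T : X → X} {α : ℝ}

theorem dist_map_map_le (hT : IsWeaklyCondContractive r T α) (hα : 0 ≤ α) {x : X}
    (hx : r x (T x)) : dist (T x) (T (T x)) ≤ α * dist x (T x) := by
  refine hT x (T x) (Or.inl hx) ?_
  rw [dist_self, max_eq_left dist_nonneg]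
  exact mul_le_of_le_one_left dist_nonneg (by rw [div_le_one₀ (by linarith)]; linarith)

theorem dist_iterate_succ_le (hT : IsWeaklyCondContractive r T α) (hα : 0 ≤ α)
    (hmono : ∀ x y, r x y → r (T x) (T y)) {x : X} (hx : r x (T x)) (n : ℕ) :
    dist (T^[n + 1] x) (T^[n + 2] x) ≤ α * dist (T^[n] x) (T^[n + 1] x) := by
  have hcomp : r (T^[n] x) (T (T^[n] x)) := by
    simpa only [iterate_succ_apply'] using rel_iterate_succ hmono hx n
  simpa only [iterate_succ_apply'] using hT.dist_map_map_le hα hcomp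

end IsWeaklyCondContractive

theorem orbit_contracts_and_cauchy_general {X : Type*} [MetricSpace X]
    (le : X → X → Prop)
    (T : X → X) (hincr : ∀ x y : X, le x y → le (T x) (T y))
    (α : ℝ) (hα0 : 0 < α) (hα1 : α < 1)
    (hcontr : ∀ x y : X, (le x y ∨ le y x) →
      (1 / (1 + α)) * max (dist x (T x)) (dist y (T x)) ≤ dist x y →
      dist (T x) (T y) ≤ α * dist x y) :
    ∀ x : X, le x (T x) →
      (∀ n : ℕ, dist (T^[n + 1] x) (T^[n + 2] x) ≤ α * dist (T^[n] x) (T^[n + 1] x)) ∧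
      CauchySeq (fun n => T^[n] x) := by
  intro x hx
  have hstep := IsWeaklyCondContractive.dist_iterate_succ_le hcontr hα0.le hincr hx
  exact ⟨hstep, cauchySeq_of_dist_succ_le_mul hα0.le hα1 hstep⟩

/-- For an increasing, weakly conditional `(G,<>)`-contractive map, the orbit
of any point `x` with `x ≤ Tx` contracts step by step; in particular it is
a Cauchy sequence. -/
theorem orbit_contracts_and_cauchy {X : Type*} [MetricSpace X]
    (le : X → X → Prop) (hrefl : ∀ x : X, le x x)
    (htrans : ∀ x y z : X, le x y → le y z → le x z)
    (T : X → X) (hincr : ∀ x y : X, le x y → le (T x) (T y))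
    (α : ℝ) (hα0 : 0 < α) (hα1 : α < 1)
    (hcontr : ∀ x y : X, (le x y ∨ le y x) →
      (1 / (1 + α)) * max (dist x (T x)) (dist y (T x)) ≤ dist x y →
      dist (T x) (T y) ≤ α * dist x y) :
    ∀ x : X, le x (T x) →
      (∀ n : ℕ, dist (T^[n + 1] x) (T^[n + 2] x) ≤ α * dist (T^[n] x) (T^[n + 1] x)) ∧
      CauchySeq (fun n => T^[n] x) :=
  orbit_contracts_and_cauchy_general le T hincr α hα0 hα1 hcontr
end

section
/- Let (X,d) be a metric space with a quasi-order ≤, and T : X → X increasing and weakly conditional (G,<>)-contractive: there exists α ∈ (0,1) such that for all x,y with x <> y, if (1/(1+α))·max{d(x,Tx), d(y,Tx)} ≤ d(x,y) then d(Tx,Ty) ≤ α·d(x,y). Assume d is ao-complete and ≤ is ao-self-closed. Then every fixed point x* of T is ≤-maximal in X(T,≤) = {x : x ≤ Tx}: for every u ∈ X with u ≤ Tu and x* ≤ u, one has u ≤ x*. -/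
/-!
The orbit of `u` stays above the fixed point `x*`, where the premise of the conditional
contraction holds automatically, so it converges to `x*` geometrically; since the orbit is
ascending, ao-self-closedness then gives `u ≤ x*`.
-/

open Filter Topology Function

theorem tendsto_of_dist_succ_le_mul {X : Type*} [PseudoMetricSpace X] {z : ℕ → X} {x : X}
    {α : ℝ} (hα0 : 0 ≤ α) (hα1 : α < 1) (h : ∀ n, dist (z (n + 1)) x ≤ α * dist (z n) x) :
    Tendsto z atTop (𝓝 x) := by
  rw [tendsto_iff_dist_tendsto_zero]
  have hgeom n : dist (z n) x ≤ α ^ n * dist (z 0) x :=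
    le_geom (u := fun n => dist (z n) x) hα0 n fun k _ => h k
  refine squeeze_zero (fun _ => dist_nonneg) hgeom ?_
  simpa using (tendsto_pow_atTop_nhds_zero_of_lt_one hα0 hα1).mul_const (dist (z 0) x)

theorem one_div_one_add_mul_max_dist_le_of_isFixedPt {X : Type*} [PseudoMetricSpace X]
    {T : X → X} {x : X} (hx : IsFixedPt T x) (y : X) {α : ℝ} (hα : 0 ≤ α) :
    1 / (1 + α) * max (dist x (T x)) (dist y (T x)) ≤ dist x y := by
  rw [hx.eq, dist_self, max_eq_right dist_nonneg, dist_comm]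
  exact mul_le_of_le_one_left dist_nonneg (div_le_one_of_le₀ (by linarith) (by linarith))

theorem tendsto_iterate_of_isFixedPt_le {X : Type*} [Preorder X] [PseudoMetricSpace X]
    {T : X → X} (hT : Monotone T) {x u : X} (hx : IsFixedPt T x) (hxu : x ≤ u) {α : ℝ}
    (hα0 : 0 ≤ α) (hα1 : α < 1) (hcontr : ∀ y, x ≤ y → dist (T x) (T y) ≤ α * dist x y) :
    Tendsto (fun n => T^[n] u) atTop (𝓝 x) := by
  refine tendsto_of_dist_succ_le_mul hα0 hα1 fun n => ?_
  have hle : x ≤ T^[n] u := iterate_fixed hx n ▸ hT.iterate n hxu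
  rw [dist_comm, iterate_succ_apply', dist_comm (T^[n] u)]
  simpa only [hx.eq] using hcontr _ hle

theorem fixedPoint_le_maximal_general {X : Type*} [MetricSpace X]
    (le : X → X → Prop) (hrefl : ∀ x : X, le x x)
    (htrans : ∀ x y z : X, le x y → le y z → le x z)
    (T : X → X) (hincr : ∀ x y : X, le x y → le (T x) (T y))
    (α : ℝ) (hα0 : 0 < α) (hα1 : α < 1)
    (hcontr : ∀ x y : X, (le x y ∨ le y x) →
      (1 / (1 + α)) * max (dist x (T x)) (dist y (T x)) ≤ dist x y →
      dist (T x) (T y) ≤ α * dist x y)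
    (haoselfclosed : ∀ (z : ℕ → X) (l : X), (∀ i j : ℕ, i ≤ j → le (z i) (z j)) →
      (∃ x : X, ∀ n, z n = T^[n] x) → Tendsto z atTop (𝓝 l) →
      ∀ n, le (z n) l) :
    ∀ xs : X, T xs = xs → ∀ u : X, le u (T u) → le xs u → le u xs := by
  intro xs hfix u hu hxu
  let _ : Preorder X := { le, le_refl := hrefl, le_trans := htrans }
  have hT : Monotone T := fun x y => hincr x y
  have hasc : Monotone fun n => T^[n] u := hT.monotone_iterate_of_le_map hu
  have hlim : Tendsto (fun n => T^[n] u) atTop (𝓝 xs) :=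
    tendsto_iterate_of_isFixedPt_le hT hfix hxu hα0.le hα1 fun y hy =>
      hcontr xs y (Or.inl hy) (one_div_one_add_mul_max_dist_le_of_isFixedPt hfix y hα0.le)
  exact haoselfclosed _ xs (fun _ _ h => hasc h) ⟨u, fun _ => rfl⟩ hlim 0

/-- Every fixed point of a weakly conditional `(G,<>)`-contractive increasing
map (under ao-completeness and ao-self-closedness) is `≤`-maximal in
`X(T,≤) = {x : x ≤ Tx}`. -/
theorem fixedPoint_le_maximal {X : Type*} [MetricSpace X]
    (le : X → X → Prop) (hrefl : ∀ x : X, le x x)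
    (htrans : ∀ x y z : X, le x y → le y z → le x z)
    (T : X → X) (hincr : ∀ x y : X, le x y → le (T x) (T y))
    (α : ℝ) (hα0 : 0 < α) (hα1 : α < 1)
    (hcontr : ∀ x y : X, (le x y ∨ le y x) →
      (1 / (1 + α)) * max (dist x (T x)) (dist y (T x)) ≤ dist x y →
      dist (T x) (T y) ≤ α * dist x y)
    (haocomplete : ∀ z : ℕ → X, (∀ i j : ℕ, i ≤ j → le (z i) (z j)) →
      (∃ x : X, ∀ n, z n = T^[n] x) → CauchySeq z →
      ∃ l : X, Tendsto z atTop (𝓝 l))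
    (haoselfclosed : ∀ (z : ℕ → X) (l : X), (∀ i j : ℕ, i ≤ j → le (z i) (z j)) →
      (∃ x : X, ∀ n, z n = T^[n] x) → Tendsto z atTop (𝓝 l) →
      ∀ n, le (z n) l) :
    ∀ xs : X, T xs = xs → ∀ u : X, le u (T u) → le xs u → le u xs :=
  fixedPoint_le_maximal_general le hrefl htrans T hincr α hα0 hα1 hcontr haoselfclosed
end

section
/- Let (X,D,≤) be an ordered metrizable uniform space such that ≤ is interval-closed. Then an increasing sequence (x_n) in X is relatively compact if and only if it D-converges to some element x of X. -/
open Filter Topology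

/-!
Interval-closedness makes the limit of any convergent subsequence of an increasing sequence an
upper bound of the whole sequence; comparing two subsequential limits this way shows they
coincide. A sequence each of whose subsequences has a further subsequence converging to one
common point converges to it.
-/

/-- `D`-convergence of a sequence in a metrizable uniform space given by the
countable family of pseudometrics `D`. -/
def DConv {X : Type*} (D : ℕ → X → X → ℝ) (x : ℕ → X) (l : X) : Prop :=
  ∀ i : ℕ, Tendsto (fun n => D i (x n) l) atTop (𝓝 0)

/-- A sequence is relatively compact if every subsequence contains a
`D`-convergent subsequence. -/
def RelCompactSeq {X : Type*} (D : ℕ → X → X → ℝ) (x : ℕ → X) : Prop :=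
  ∀ q : ℕ → ℕ, StrictMono q →
    ∃ p : ℕ → ℕ, StrictMono p ∧ ∃ l : X, DConv D (fun n => x (q (p n))) l

/-- A subset is order closed when the limit of any `D`-convergent increasing
sequence in it belongs to it. -/
def OrderClosed {X : Type*} [PartialOrder X] (D : ℕ → X → X → ℝ) (Y : Set X) : Prop :=
  ∀ (z : ℕ → X) (l : X), (∀ n, z n ∈ Y) → (∀ i j : ℕ, i ≤ j → z i ≤ z j) →
    DConv D z l → l ∈ Y

/-- The ordering is interval closed when all sets `[x,≤)` and `(≤,x]` are
order closed. -/
def IntervalClosed {X : Type*} [PartialOrder X] (D : ℕ → X → X → ℝ) : Prop :=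
  ∀ x : X, OrderClosed D {y | x ≤ y} ∧ OrderClosed D {y | y ≤ x}

section

variable {X : Type*} {D : ℕ → X → X → ℝ} {x : ℕ → X}

theorem DConv.comp_tendsto {l : X} (hx : DConv D x l) {φ : ℕ → ℕ}
    (hφ : Tendsto φ atTop atTop) : DConv D (x ∘ φ) l :=
  fun i => (hx i).comp hφ

theorem dConv_of_forall_subseq {l : X}
    (h : ∀ q : ℕ → ℕ, StrictMono q →
      ∃ p : ℕ → ℕ, StrictMono p ∧ DConv D (fun n => x (q (p n))) l) :
    DConv D x l := by
  intro i
  refine tendsto_of_subseq_tendsto fun ns hns => ?_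
  obtain ⟨ψ, -, hq⟩ := strictMono_subseq_of_tendsto_atTop hns
  obtain ⟨p, -, hp⟩ := h _ hq
  exact ⟨ψ ∘ p, hp i⟩

variable [PartialOrder X]

theorem IntervalClosed.le_of_dConv_subseq (hic : IntervalClosed D) (hx : Monotone x)
    {φ : ℕ → ℕ} (hφ : StrictMono φ) {l : X} (hl : DConv D (x ∘ φ) l) (n : ℕ) : x n ≤ l := by
  -- the tail `x (φ (m + n))` lies in `[x n, ≤)`
  have hshift : StrictMono fun m => φ (m + n) := hφ.comp (strictMono_id.add_const n)
  refine (hic (x n)).1 (fun m => x (φ (m + n))) l (fun m => hx ?_)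
    (fun _ _ hij => hx (hshift.monotone hij)) (hl.comp_tendsto (tendsto_add_atTop_nat n))
  exact (Nat.le_add_left n m).trans (hφ.id_le _)

theorem IntervalClosed.dConv_subseq_unique (hic : IntervalClosed D) (hx : Monotone x)
    {φ ψ : ℕ → ℕ} (hφ : StrictMono φ) (hψ : StrictMono ψ) {l l' : X}
    (hl : DConv D (x ∘ φ) l) (hl' : DConv D (x ∘ ψ) l') : l = l' :=
  le_antisymm
    ((hic l').2 (x ∘ φ) l (fun n => hic.le_of_dConv_subseq hx hψ hl' (φ n))
      (fun _ _ hij => hx (hφ.monotone hij)) hl)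
    ((hic l).2 (x ∘ ψ) l' (fun n => hic.le_of_dConv_subseq hx hφ hl (ψ n))
      (fun _ _ hij => hx (hψ.monotone hij)) hl')

end

theorem increasing_relCompact_iff_conv_general {X : Type*} [PartialOrder X]
    (D : ℕ → X → X → ℝ)
    (hic : IntervalClosed D)
    (x : ℕ → X) (hmono : ∀ i j : ℕ, i ≤ j → x i ≤ x j) :
    RelCompactSeq D x ↔ ∃ l : X, DConv D x l := by
  constructor
  · intro hrc
    obtain ⟨p, hp, l, hl⟩ := hrc id strictMono_id
    refine ⟨l, dConv_of_forall_subseq fun q hq => ?_⟩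
    obtain ⟨p', hp', l', hl'⟩ := hrc q hq
    have hll' : l = l' := hic.dConv_subseq_unique hmono hp (hq.comp hp') hl hl'
    exact ⟨p', hp', hll' ▸ hl'⟩
  · rintro ⟨l, hl⟩ q hq
    exact ⟨id, strictMono_id, l, hl.comp_tendsto hq.tendsto_atTop⟩

/-- Lemma 1: in an ordered metrizable uniform space with interval-closed order,
an increasing sequence is relatively compact iff it `D`-converges. -/
theorem increasing_relCompact_iff_conv {X : Type*} [PartialOrder X] [Nonempty X]
    (D : ℕ → X → X → ℝ)
    (hD0 : ∀ i (x : X), D i x x = 0)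
    (hDsymm : ∀ i (x y : X), D i x y = D i y x)
    (hDtri : ∀ i (x y z : X), D i x z ≤ D i x y + D i y z)
    (hDsuff : ∀ x y : X, (∀ i, D i x y = 0) → x = y)
    (hic : IntervalClosed D)
    (x : ℕ → X) (hmono : ∀ i j : ℕ, i ≤ j → x i ≤ x j) :
    RelCompactSeq D x ↔ ∃ l : X, DConv D x l :=
  increasing_relCompact_iff_conv_general D hic x hmono
end

section
/- Let (X,D,≤) be an ordered metrizable uniform space with ≤ interval-closed. Let Y be an order-closed subset of X, T : Y → Y an increasing map, and Y_oi = {x ∈ Y : x ≤ Tx} nonempty. Assume (d04): there exists k ∈ ℕ such that T^k(Y) is order-sequentially relatively compact (every increasing sequence in T^k(Y) is relatively compact). Then for every u ∈ Y_oi there exists v ∈ Y with v = Tv such that (a) u ≤ v, and (b) whenever w ∈ Y_oi satisfies v ≤ w, one has v = w. -/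
/-!
Work in `N = {x ∈ Y | x ≤ T x} ∩ T^k(Y)`. By (d04), every increasing sequence in `N` has a
convergent subsequence, and interval-closedness forces all such subsequential limits to be
upper bounds of the sequence, hence equal: the whole sequence converges to an upper bound.
A Brezis–Browder construction then produces an increasing sequence `xₙ` in `N` whose step
`xₙ ≤ xₙ₊₁` realises at least half of the largest (truncated) `dᵢ`-jump above `xₙ` inside `N`,
each index `i` being visited infinitely often. Its limit `l` coincides with every upper bound of
the sequence in `N`. As `T^k` maps `x ∈ Y` with `x ≤ T x` into `N` above `x`, any such `w ≥ l`
satisfies `l ≤ w ≤ T^k w = l`; applied to `w = T l` this also gives `T l = l`.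
-/

open Filter Topology

/-- A subset is order-sequentially relatively compact when each increasing
sequence in it is relatively compact. -/
def OrderSeqRelCompact {X : Type*} [PartialOrder X] (D : ℕ → X → X → ℝ) (Z : Set X) : Prop :=
  ∀ z : ℕ → X, (∀ n, z n ∈ Z) → (∀ i j : ℕ, i ≤ j → z i ≤ z j) → RelCompactSeq D z

section OrderedPseudometric

variable {X : Type*} {D : ℕ → X → X → ℝ}

lemma DConv.comp_tendsto_s15 {z : ℕ → X} {l : X} (h : DConv D z l) {s : ℕ → ℕ}
    (hs : Tendsto s atTop atTop) : DConv D (fun n => z (s n)) l :=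
  fun i => (h i).comp hs

variable [PartialOrder X]

namespace IntervalClosed

lemma le_of_dconv_subseq (hic : IntervalClosed D) {z : ℕ → X} (hz : Monotone z)
    {s : ℕ → ℕ} (hs : StrictMono s) {l : X} (hl : DConv D (fun n => z (s n)) l) (m : ℕ) :
    z m ≤ l :=
  (hic (z m)).1 (fun n => z (s (n + m))) l
    (fun n => hz ((Nat.le_add_left m n).trans hs.le_apply))
    (fun _ _ hij => hz (hs.monotone (Nat.add_le_add_right hij m)))
    (hl.comp_tendsto_s15 (tendsto_add_atTop_nat m))

lemma eq_of_dconv_subseq (hic : IntervalClosed D) {z : ℕ → X} (hz : Monotone z)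
    {s s' : ℕ → ℕ} (hs : StrictMono s) (hs' : StrictMono s') {l l' : X}
    (hl : DConv D (fun n => z (s n)) l) (hl' : DConv D (fun n => z (s' n)) l') : l' = l :=
  le_antisymm
    ((hic l).2 _ l' (fun _ => hic.le_of_dconv_subseq hz hs hl _)
      (fun _ _ hij => hz (hs'.monotone hij)) hl')
    ((hic l').2 _ l (fun _ => hic.le_of_dconv_subseq hz hs' hl' _)
      (fun _ _ hij => hz (hs.monotone hij)) hl)

lemma exists_dconv_of_relCompactSeq (hic : IntervalClosed D) {z : ℕ → X} (hz : Monotone z)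
    (hrc : RelCompactSeq D z) : ∃ l, DConv D z l ∧ ∀ n, z n ≤ l := by
  obtain ⟨p, hp, l, hl⟩ := hrc id strictMono_id
  refine ⟨l, fun i => tendsto_of_subseq_tendsto fun ns hns => ?_,
    hic.le_of_dconv_subseq hz hp hl⟩
  obtain ⟨φ, -, hφ⟩ := strictMono_subseq_of_tendsto_atTop hns
  obtain ⟨p', hp', l', hl'⟩ := hrc (ns ∘ φ) hφ
  obtain rfl := hic.eq_of_dconv_subseq hz hp (hφ.comp hp') hl hl'
  exact ⟨φ ∘ p', hl' i⟩

end IntervalClosed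

noncomputable def spread (D : ℕ → X → X → ℝ) (N : Set X) (i : ℕ) (x : X) : ℝ :=
  sSup ((fun z => min 1 (D i x z)) '' {z ∈ N | x ≤ z})

section Spread

variable {N : Set X} {i : ℕ} {x : X}

lemma min_one_le_spread {z : X} (hz : z ∈ N) (hxz : x ≤ z) :
    min 1 (D i x z) ≤ spread D N i x :=
  le_csSup ⟨1, by rintro _ ⟨w, -, rfl⟩; exact min_le_left _ _⟩ ⟨z, ⟨hz, hxz⟩, rfl⟩

lemma exists_spread_le_two_mul (hD0 : ∀ i x, D i x x = 0) (hx : x ∈ N) (i : ℕ) :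
    ∃ y ∈ N, x ≤ y ∧ spread D N i x ≤ 2 * min 1 (D i x y) := by
  rcases le_or_gt (spread D N i x) 0 with h | h
  · exact ⟨x, hx, le_rfl, by simpa [hD0] using h⟩
  · obtain ⟨_, ⟨y, ⟨hy, hxy⟩, rfl⟩, hlt⟩ :=
      exists_lt_of_lt_csSup
      ((show ({z ∈ N | x ≤ z} : Set X).Nonempty from ⟨x, hx, le_rfl⟩).image _) (half_lt_self h)
    have hlt : spread D N i x / 2 < min 1 (D i x y) := hlt
    exact ⟨y, hy, hxy, by linarith⟩

/-- Indexing the pseudometric by `n.unpair.1` serves every index `i` infinitely often,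
along `n = Nat.pair i m`. -/
lemma exists_chain_spread_le (hD0 : ∀ i x, D i x x = 0) {x₀ : X} (hx₀ : x₀ ∈ N) :
    ∃ x : ℕ → X, x 0 = x₀ ∧ (∀ n, x n ∈ N) ∧ Monotone x ∧
      ∀ n, spread D N n.unpair.1 (x n) ≤ 2 * min 1 (D n.unpair.1 (x n) (x (n + 1))) := by
  choose! next hnextN hle hnext using fun (x : X) (hx : x ∈ N) i =>
    exists_spread_le_two_mul hD0 hx i
  let x : ℕ → X := fun n => Nat.rec (motive := fun _ => X) x₀ (fun m y => next y m.unpair.1) n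
  have hxN : ∀ n, x n ∈ N := fun n => by
    induction n with
    | zero => exact hx₀
    | succ n ih => exact hnextN _ ih _
  exact ⟨x, rfl, hxN, monotone_nat_of_le_succ fun n => hle _ (hxN n) _,
    fun n => hnext _ (hxN n) _⟩

lemma eq_of_chain_spread_le (hD0 : ∀ i x, D i x x = 0)
    (hDsymm : ∀ i (x y : X), D i x y = D i y x)
    (hDtri : ∀ i (x y z : X), D i x z ≤ D i x y + D i y z)
    (hDsuff : ∀ x y : X, (∀ i, D i x y = 0) → x = y) {x : ℕ → X}
    (hx : ∀ n, spread D N n.unpair.1 (x n) ≤ 2 * min 1 (D n.unpair.1 (x n) (x (n + 1))))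
    {l : X} (hl : DConv D x l) {z : X} (hz : z ∈ N) (hxz : ∀ n, x n ≤ z) : z = l := by
  refine hDsuff z l fun i => ?_
  have hnonneg : ∀ a b : X, 0 ≤ D i a b := fun a b => by
    linarith [hDtri i a b a, hD0 i a, hDsymm i b a]
  have hjump : ∀ n, n.unpair.1 = i →
      min 1 (D i l z) ≤ D i (x n) l + 2 * (D i (x n) l + D i (x (n + 1)) l) := by
    intro n hn
    have hstep := hx n
    rw [hn] at hstep
    have hfar : min 1 (D i (x n) z) ≤ 2 * (D i (x n) l + D i (x (n + 1)) l) := calc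
      _ ≤ spread D N i (x n) := min_one_le_spread hz (hxz n)
      _ ≤ 2 * D i (x n) (x (n + 1)) := hstep.trans (by gcongr; exact min_le_right _ _)
      _ ≤ _ := by gcongr; rw [hDsymm i (x (n + 1)) l]; exact hDtri i _ l _
    have hnear : D i l z ≤ D i (x n) l + D i (x n) z := hDsymm i l (x n) ▸ hDtri i l (x n) z
    rcases min_cases (1 : ℝ) (D i (x n) z) with ⟨h, -⟩ | ⟨h, -⟩ <;> rw [h] at hfar <;>
      linarith [min_le_left 1 (D i l z), min_le_right 1 (D i l z), hnonneg (x n) l]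
  have hpair : Tendsto (Nat.pair i) atTop atTop :=
    tendsto_atTop_mono (Nat.right_le_pair i) tendsto_id
  have hlim : Tendsto (fun m => D i (x (Nat.pair i m)) l +
      2 * (D i (x (Nat.pair i m)) l + D i (x (Nat.pair i m + 1)) l)) atTop (𝓝 0) := by
    simpa using ((hl i).comp hpair).add
      ((((hl i).comp hpair).add ((hl i).comp ((tendsto_add_atTop_nat 1).comp hpair))).const_mul 2)
  have hmin : min 1 (D i l z) ≤ 0 :=
    ge_of_tendsto' hlim fun m => hjump _ (by rw [Nat.unpair_pair])
  rw [hDsymm]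
  exact le_antisymm ((min_le_iff.1 hmin).resolve_left (by norm_num)) (hnonneg l z)

/-- A Brezis–Browder ordering principle for an ordered space with a sufficient family of
pseudometrics. -/
theorem exists_chain_dconv_forall_upperBound_eq (hD0 : ∀ i x, D i x x = 0)
    (hDsymm : ∀ i (x y : X), D i x y = D i y x)
    (hDtri : ∀ i (x y z : X), D i x z ≤ D i x y + D i y z)
    (hDsuff : ∀ x y : X, (∀ i, D i x y = 0) → x = y) {x₀ : X} (hx₀ : x₀ ∈ N)
    (hN : ∀ x : ℕ → X, (∀ n, x n ∈ N) → Monotone x → ∃ l, DConv D x l ∧ ∀ n, x n ≤ l) :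
    ∃ x : ℕ → X, ∃ l, x 0 = x₀ ∧ (∀ n, x n ∈ N) ∧ Monotone x ∧ DConv D x l ∧
      (∀ n, x n ≤ l) ∧ ∀ z ∈ N, (∀ n, x n ≤ z) → z = l := by
  obtain ⟨x, hx0, hxN, hxmono, hx⟩ := exists_chain_spread_le hD0 hx₀
  obtain ⟨l, hxl, hxle⟩ := hN x hxN hxmono
  exact ⟨x, l, hx0, hxN, hxmono, hxl, hxle, fun z hz hxz =>
    eq_of_chain_spread_le hD0 hDsymm hDtri hDsuff hx hxl hz hxz⟩

end Spread

section Iterate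

variable {Y : Set X} {T : X → X}

lemma mapsTo_sep_le_map (hTY : ∀ x ∈ Y, T x ∈ Y)
    (hTincr : ∀ x ∈ Y, ∀ y ∈ Y, x ≤ y → T x ≤ T y) :
    Set.MapsTo T {x ∈ Y | x ≤ T x} {x ∈ Y | x ≤ T x} :=
  fun x hx => ⟨hTY x hx.1, hTincr _ hx.1 _ (hTY x hx.1) hx.2⟩

lemma le_iterate_of_le_map (hTY : ∀ x ∈ Y, T x ∈ Y)
    (hTincr : ∀ x ∈ Y, ∀ y ∈ Y, x ≤ y → T x ≤ T y) {x : X} (hx : x ∈ {x ∈ Y | x ≤ T x})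
    (k : ℕ) : x ≤ T^[k] x :=
  monotone_nat_of_le_succ (f := fun n => T^[n] x) (fun n => by
    rw [Function.iterate_succ_apply']
    exact ((mapsTo_sep_le_map hTY hTincr).iterate n hx).2) (Nat.zero_le k)

end Iterate

end OrderedPseudometric

theorem comparison_fixed_point_d04_general {X : Type*} [PartialOrder X]
    (D : ℕ → X → X → ℝ)
    (hD0 : ∀ i (x : X), D i x x = 0)
    (hDsymm : ∀ i (x y : X), D i x y = D i y x)
    (hDtri : ∀ i (x y z : X), D i x z ≤ D i x y + D i y z)
    (hDsuff : ∀ x y : X, (∀ i, D i x y = 0) → x = y)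
    (hic : IntervalClosed D)
    (Y : Set X) (hYclosed : OrderClosed D Y)
    (T : X → X) (hTY : ∀ x ∈ Y, T x ∈ Y)
    (hTincr : ∀ x ∈ Y, ∀ y ∈ Y, x ≤ y → T x ≤ T y)
    (hd04 : ∃ k : ℕ, OrderSeqRelCompact D (T^[k] '' Y)) :
    ∀ u ∈ ({x ∈ Y | x ≤ T x} : Set X), ∃ v ∈ Y, T v = v ∧ u ≤ v ∧
      ∀ w ∈ ({x ∈ Y | x ≤ T x} : Set X), v ≤ w → v = w := by
  obtain ⟨k, hk⟩ := hd04
  intro u hu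
  have hmapsTo := mapsTo_sep_le_map hTY hTincr
  obtain ⟨x, l, hx0, hxN, hxmono, hxl, hxle, hmax⟩ :=
    exists_chain_dconv_forall_upperBound_eq hD0 hDsymm hDtri hDsuff
      (N := {x ∈ Y | x ≤ T x} ∩ T^[k] '' Y) ⟨hmapsTo.iterate k hu, u, hu.1, rfl⟩
      fun x hxN hx => hic.exists_dconv_of_relCompactSeq hx
        (hk x (fun n => (hxN n).2) fun _ _ h => hx h)
  have hlY : l ∈ Y := hYclosed x l (fun n => (hxN n).1.1) (fun _ _ h => hxmono h) hxl
  have hlT : l ≤ T l := (hic (T l)).2 x l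
    (fun n => (hxN n).1.2.trans (hTincr _ (hxN n).1.1 _ hlY (hxle n))) (fun _ _ h => hxmono h) hxl
  have hmaximal : ∀ w ∈ ({x ∈ Y | x ≤ T x} : Set X), l ≤ w → l = w := fun w hw hlw => by
    have hw' := le_iterate_of_le_map hTY hTincr hw k
    have hwl := hmax _ ⟨hmapsTo.iterate k hw, w, hw.1, rfl⟩
      fun n => (hxle n).trans (hlw.trans hw')
    exact le_antisymm hlw (hwl ▸ hw')
  refine ⟨l, hlY, (hmaximal (T l) (hmapsTo ⟨hlY, hlT⟩) hlT).symm, ?_, hmaximal⟩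
  exact (le_iterate_of_le_map hTY hTincr hu k).trans (hx0 ▸ hxle 0)

/-- Theorem 7: the variant of the first main result under hypothesis (d04). -/
theorem comparison_fixed_point_d04 {X : Type*} [PartialOrder X] [Nonempty X]
    (D : ℕ → X → X → ℝ)
    (hD0 : ∀ i (x : X), D i x x = 0)
    (hDsymm : ∀ i (x y : X), D i x y = D i y x)
    (hDtri : ∀ i (x y z : X), D i x z ≤ D i x y + D i y z)
    (hDsuff : ∀ x y : X, (∀ i, D i x y = 0) → x = y)
    (hic : IntervalClosed D)
    (Y : Set X) (hYclosed : OrderClosed D Y)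
    (T : X → X) (hTY : ∀ x ∈ Y, T x ∈ Y)
    (hTincr : ∀ x ∈ Y, ∀ y ∈ Y, x ≤ y → T x ≤ T y)
    (hne : ({x ∈ Y | x ≤ T x} : Set X).Nonempty)
    (hd04 : ∃ k : ℕ, OrderSeqRelCompact D (T^[k] '' Y)) :
    ∀ u ∈ ({x ∈ Y | x ≤ T x} : Set X), ∃ v ∈ Y, T v = v ∧ u ≤ v ∧
      ∀ w ∈ ({x ∈ Y | x ≤ T x} : Set X), v ≤ w → v = w :=
  comparison_fixed_point_d04_general D hD0 hDsymm hDtri hDsuff hic Y hYclosed T hTY hTincr hd04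
end

section
/- Let (X,D,≤) be an ordered metrizable uniform space with ≤ interval-closed. Let Y be an order-closed subset of X, T : Y → Y an increasing map, and Y_oi = {x ∈ Y : x ≤ Tx} nonempty. Assume: (d05) for every x ∈ Y_oi the (increasing) orbit sequence (T^n x) is relatively compact; (d06) T is sequentially continuous at the left: for each x in Y and each increasing sequence (x_n) in Y with x_n D-converging to x and x_n ≤ x for all n, the sequence (Tx_n) D-converges to Tx; (d07) T has the order uniqueness property: x ≤ y, x = Tx, y = Ty imply x = y. Then for every u ∈ Y_oi there exists v ∈ Y with v = Tv such that (a) u ≤ v, and (b) whenever w ∈ Y_oi satisfies v ≤ w, one has v = w. -/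
open Filter Topology

/-!
Starting from `u ≤ T u`, the orbit `Tⁿ u` is increasing, and by (d05) a subsequence converges to
some `v ∈ Y`. Interval-closedness makes `v` an upper bound of the whole orbit. Passing to the limit
in `Tⁿ u ≤ T v` gives `v ≤ T v`, and left continuity (d06) turns `T(Tᵖ⁽ⁿ⁾ u) ≤ v` into `T v ≤ v`.
So every `u ∈ Y_oi` lies below a fixed point; if a fixed point `v` lies below `w ∈ Y_oi`, then `w`
lies below a fixed point `v'`, and uniqueness (d07) forces `v = v'`, squeezing `w = v`.
-/

section

open Set

variable {X : Type*} {D : ℕ → X → X → ℝ}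

theorem DConv.comp_tendsto_atTop {x : ℕ → X} {l : X} (h : DConv D x l) {φ : ℕ → ℕ}
    (hφ : Tendsto φ atTop atTop) : DConv D (x ∘ φ) l :=
  fun i => (h i).comp hφ

variable [PartialOrder X]

theorem OrderClosed.mem_of_dConv {Y : Set X} (hY : OrderClosed D Y) {z : ℕ → X} {l : X}
    (hzY : ∀ n, z n ∈ Y) (hz : Monotone z) (hl : DConv D z l) : l ∈ Y :=
  hY z l hzY (fun _ _ h => hz h) hl

namespace IntervalClosed

theorem dConv_le (hic : IntervalClosed D) {z : ℕ → X} {l b : X} (hzb : ∀ n, z n ≤ b)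
    (hz : Monotone z) (hl : DConv D z l) : l ≤ b :=
  (hic b).2.mem_of_dConv hzb hz hl

theorem le_of_dConv (hic : IntervalClosed D) {z : ℕ → X} {l : X} (hz : Monotone z)
    (hl : DConv D z l) (n : ℕ) : z n ≤ l :=
  (hic (z n)).1.mem_of_dConv (z := fun k => z (k + n)) (fun k => hz (Nat.le_add_left n k))
    (fun _ _ h => hz (by omega)) (hl.comp_tendsto_atTop (tendsto_add_atTop_nat n))

theorem le_of_dConv_subseq_s16 (hic : IntervalClosed D) {x : ℕ → X} (hx : Monotone x)
    {p : ℕ → ℕ} (hp : StrictMono p) {l : X} (hl : DConv D (x ∘ p) l) (n : ℕ) : x n ≤ l :=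
  (hx hp.le_apply).trans (hic.le_of_dConv (hx.comp hp.monotone) hl n)

end IntervalClosed

theorem MonotoneOn.monotone_iterate_of_le_map {Y : Set X} {T : X → X} (hT : MonotoneOn T Y)
    (hTY : MapsTo T Y Y) {x : X} (hx : x ∈ Y) (hxT : x ≤ T x) : Monotone fun n => T^[n] x := by
  refine monotone_nat_of_le_succ fun n => ?_
  induction n with
  | zero => exact hxT
  | succ n ih =>
    simpa only [Function.iterate_succ_apply'] using
      hT (hTY.iterate n hx) (hTY.iterate (n + 1) hx) ih

theorem exists_fixedPoint_ge_of_le_map (hic : IntervalClosed D) {Y : Set X}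
    (hY : OrderClosed D Y) {T : X → X} (hTY : MapsTo T Y Y) (hT : MonotoneOn T Y)
    (hcont : ∀ x ∈ Y, ∀ z : ℕ → X, (∀ n, z n ∈ Y) → Monotone z → DConv D z x →
      (∀ n, z n ≤ x) → DConv D (T ∘ z) (T x))
    {u : X} (hu : u ∈ Y) (huT : u ≤ T u) (hcpt : RelCompactSeq D fun n => T^[n] u) :
    ∃ v ∈ Y, T v = v ∧ u ≤ v := by
  set x : ℕ → X := fun n => T^[n] u
  have hxY : ∀ n, x n ∈ Y := fun n => hTY.iterate n hu
  have hx : Monotone x := hT.monotone_iterate_of_le_map hTY hu huT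
  have hTx : ∀ n, T (x n) = x (n + 1) := fun n => (Function.iterate_succ_apply' T n u).symm
  obtain ⟨p, hp, v, hv⟩ := hcpt id strictMono_id
  have hxp : Monotone (x ∘ p) := hx.comp hp.monotone
  have hvY : v ∈ Y := hY.mem_of_dConv (fun n => hxY (p n)) hxp hv
  have hxv : ∀ n, x n ≤ v := hic.le_of_dConv_subseq_s16 hx hp hv
  have hx_le_Tv : ∀ n, x n ≤ T v := fun n =>
    calc x n ≤ x (n + 1) := hx n.le_succ
      _ = T (x n) := (hTx n).symm
      _ ≤ T v := hT (hxY n) hvY (hxv n)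
  have hv_le_Tv : v ≤ T v := hic.dConv_le (fun n => hx_le_Tv (p n)) hxp hv
  have hTv_le_v : T v ≤ v :=
    hic.dConv_le (fun n => (hTx (p n)).trans_le (hxv _))
      (fun _ _ h => hT (hxY _) (hxY _) (hxp h))
      (hcont v hvY (x ∘ p) (fun n => hxY (p n)) hxp hv fun n => hxv (p n))
  exact ⟨v, hvY, hTv_le_v.antisymm hv_le_Tv, hxv 0⟩

end

theorem comparison_fixed_point_d05_general {X : Type*} [PartialOrder X]
    (D : ℕ → X → X → ℝ)
    (hic : IntervalClosed D)
    (Y : Set X) (hYclosed : OrderClosed D Y)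
    (T : X → X) (hTY : ∀ x ∈ Y, T x ∈ Y)
    (hTincr : ∀ x ∈ Y, ∀ y ∈ Y, x ≤ y → T x ≤ T y)
    (hd05 : ∀ x ∈ ({x ∈ Y | x ≤ T x} : Set X), RelCompactSeq D (fun n => T^[n] x))
    (hd06 : ∀ x ∈ Y, ∀ z : ℕ → X, (∀ n, z n ∈ Y) → (∀ i j : ℕ, i ≤ j → z i ≤ z j) →
      DConv D z x → (∀ n, z n ≤ x) → DConv D (fun n => T (z n)) (T x))
    (hd07 : ∀ x ∈ Y, ∀ y ∈ Y, x ≤ y → T x = x → T y = y → x = y) :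
    ∀ u ∈ ({x ∈ Y | x ≤ T x} : Set X), ∃ v ∈ Y, T v = v ∧ u ≤ v ∧
      ∀ w ∈ ({x ∈ Y | x ≤ T x} : Set X), v ≤ w → v = w := by
  have below_fixedPoint : ∀ u ∈ {x ∈ Y | x ≤ T x}, ∃ v ∈ Y, T v = v ∧ u ≤ v := fun u hu =>
    exists_fixedPoint_ge_of_le_map hic hYclosed hTY hTincr hd06 hu.1 hu.2 (hd05 u hu)
  intro u hu
  obtain ⟨v, hvY, hTv, huv⟩ := below_fixedPoint u hu
  refine ⟨v, hvY, hTv, huv, fun w hw hvw => ?_⟩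
  obtain ⟨v', hv'Y, hTv', hwv'⟩ := below_fixedPoint w hw
  have hvv' : v = v' := hd07 v hvY v' hv'Y (hvw.trans hwv') hTv hTv'
  exact hvw.antisymm (hvv' ▸ hwv')

/-- Theorem 8 (second main result, 1986): the variant of the comparison
theorem under hypotheses (d05)+(d06)+(d07). -/
theorem comparison_fixed_point_d05 {X : Type*} [PartialOrder X] [Nonempty X]
    (D : ℕ → X → X → ℝ)
    (hD0 : ∀ i (x : X), D i x x = 0)
    (hDsymm : ∀ i (x y : X), D i x y = D i y x)
    (hDtri : ∀ i (x y z : X), D i x z ≤ D i x y + D i y z)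
    (hDsuff : ∀ x y : X, (∀ i, D i x y = 0) → x = y)
    (hic : IntervalClosed D)
    (Y : Set X) (hYclosed : OrderClosed D Y)
    (T : X → X) (hTY : ∀ x ∈ Y, T x ∈ Y)
    (hTincr : ∀ x ∈ Y, ∀ y ∈ Y, x ≤ y → T x ≤ T y)
    (hne : ({x ∈ Y | x ≤ T x} : Set X).Nonempty)
    (hd05 : ∀ x ∈ ({x ∈ Y | x ≤ T x} : Set X), RelCompactSeq D (fun n => T^[n] x))
    (hd06 : ∀ x ∈ Y, ∀ z : ℕ → X, (∀ n, z n ∈ Y) → (∀ i j : ℕ, i ≤ j → z i ≤ z j) →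
      DConv D z x → (∀ n, z n ≤ x) → DConv D (fun n => T (z n)) (T x))
    (hd07 : ∀ x ∈ Y, ∀ y ∈ Y, x ≤ y → T x = x → T y = y → x = y) :
    ∀ u ∈ ({x ∈ Y | x ≤ T x} : Set X), ∃ v ∈ Y, T v = v ∧ u ≤ v ∧
      ∀ w ∈ ({x ∈ Y | x ≤ T x} : Set X), v ≤ w → v = w :=
  comparison_fixed_point_d05_general D hic Y hYclosed T hTY hTincr hd05 hd06 hd07
end

section
/- Let X be a nonempty set with a partial order ≤ and a countable family D = (d_i ; i ∈ ℕ) of pseudometrics on X. Let Y ⊆ X, T : Y → Y increasing (x ≤ y implies Tx ≤ Ty), and u ∈ Y with u ≤ Tu. Suppose for each i ∈ ℕ there is an increasing function f_i : [0,∞) → [0,∞) with f_i^n(t) → 0 as n → ∞ for every t > 0, such that d_i(Tx,Ty) ≤ f_i(d_i(x,y)) whenever x,y ∈ Y with x ≤ y. Then the orbit (T^n u ; n ≥ 0) is D-Cauchy: for each i ∈ ℕ and ε > 0 there exists m such that d_i(T^m u, T^{m+n} u) ≤ ε for all n ≥ 0. -/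
/-!
A Matkowski function `f` satisfies `f t < t` for `t > 0`, since otherwise its iterates at `t`
would stay above `t`. Along the increasing orbit `x n = T^[n] u` the successive distances
`d (x n) (x (n + 1))` are dominated by `f^[n]` of a positive constant, so they tend to `0`.
Pick `m` with `d (x m) (x (m + 1)) ≤ ε - f ε`; then `d (x m) (x (m + n)) ≤ ε` propagates in `n`,
because `d (x m) (x (m + n + 1)) ≤ d (x m) (x (m + 1)) + f (d (x m) (x (m + n))) ≤ (ε - f ε) + f ε`.
-/

open Filter Topology Set

section MatkowskiFunction

variable {f : ℝ → ℝ}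

theorem lt_self_of_tendsto_iterate_zero (hf : MonotoneOn f (Ici 0)) {t : ℝ} (ht : 0 < t)
    (hiter : Tendsto (fun n => f^[n] t) atTop (𝓝 0)) : f t < t := by
  by_contra! hle
  have hge : ∀ n, t ≤ f^[n] t := by
    intro n
    induction n with
    | zero => rfl
    | succ n ih =>
      rw [Function.iterate_succ_apply']
      exact hle.trans (hf ht.le (ht.le.trans ih) ih)
  linarith [ge_of_tendsto' hiter hge]

theorem tendsto_zero_of_le_apply_of_tendsto_iterate_zero (hf : MonotoneOn f (Ici 0))
    (hiter : ∀ t, 0 < t → Tendsto (fun n => f^[n] t) atTop (𝓝 0))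
    {a : ℕ → ℝ} (ha : ∀ n, 0 ≤ a n) (hstep : ∀ n, a (n + 1) ≤ f (a n)) :
    Tendsto a atTop (𝓝 0) := by
  have hdom : ∀ n, a n ≤ f^[n] (a 0 + 1) := by
    intro n
    induction n with
    | zero => simp
    | succ n ih =>
      rw [Function.iterate_succ_apply']
      exact (hstep n).trans (hf (ha n) ((ha n).trans ih) ih)
  exact squeeze_zero ha hdom (hiter _ (by linarith [ha 0]))

end MatkowskiFunction

theorem monotone_iterate_of_monotoneOn {X : Type*} [Preorder X] {Y : Set X} {T : X → X}
    (hTY : MapsTo T Y Y) (hT : MonotoneOn T Y) {u : X} (hu : u ∈ Y) (huT : u ≤ T u) :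
    Monotone fun n => T^[n] u := by
  refine monotone_nat_of_le_succ fun n => ?_
  induction n with
  | zero => simpa using huT
  | succ n ih =>
    rw [Function.iterate_succ_apply' T n, Function.iterate_succ_apply' T (n + 1)]
    exact hT (hTY.iterate n hu) (hTY.iterate (n + 1) hu) ih

theorem dist_le_of_step_le_sub {α : Type*} {d : α → α → ℝ} (hd0 : ∀ a, d a a = 0)
    (hdnn : ∀ a b, 0 ≤ d a b) (hdtri : ∀ a b c, d a c ≤ d a b + d b c)
    {f : ℝ → ℝ} (hf : MonotoneOn f (Ici 0)) {x : ℕ → α}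
    (hcontr : ∀ k l, k ≤ l → d (x (k + 1)) (x (l + 1)) ≤ f (d (x k) (x l)))
    {ε : ℝ} (hε : 0 ≤ ε) {m : ℕ} (hm : d (x m) (x (m + 1)) ≤ ε - f ε) (n : ℕ) :
    d (x m) (x (m + n)) ≤ ε := by
  induction n with
  | zero => simpa [hd0] using hε
  | succ n ih =>
    calc d (x m) (x (m + (n + 1)))
        ≤ d (x m) (x (m + 1)) + d (x (m + 1)) (x (m + n + 1)) := hdtri _ _ _
      _ ≤ (ε - f ε) + f ε :=
          add_le_add hm ((hcontr m (m + n) (by omega)).trans (hf (hdnn _ _) hε ih))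
      _ = ε := by ring

theorem orbit_DCauchy_of_matkowski_general {X : Type*} [PartialOrder X]
    (D : ℕ → X → X → ℝ)
    (hD0 : ∀ i (x : X), D i x x = 0)
    (hDsymm : ∀ i (x y : X), D i x y = D i y x)
    (hDtri : ∀ i (x y z : X), D i x z ≤ D i x y + D i y z)
    (Y : Set X)
    (T : X → X) (hTY : ∀ x ∈ Y, T x ∈ Y)
    (hTincr : ∀ x ∈ Y, ∀ y ∈ Y, x ≤ y → T x ≤ T y)
    (u : X) (hu : u ∈ Y) (huT : u ≤ T u)
    (hd09 : ∀ i : ℕ, ∃ f : ℝ → ℝ,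
      (∀ t : ℝ, 0 ≤ t → 0 ≤ f t) ∧
      (∀ s t : ℝ, 0 ≤ s → s ≤ t → f s ≤ f t) ∧
      (∀ t : ℝ, 0 < t → Tendsto (fun n => f^[n] t) atTop (𝓝 0)) ∧
      (∀ x ∈ Y, ∀ y ∈ Y, x ≤ y → D i (T x) (T y) ≤ f (D i x y))) :
    ∀ i : ℕ, ∀ ε : ℝ, 0 < ε → ∃ m : ℕ, ∀ n : ℕ, D i (T^[m] u) (T^[m + n] u) ≤ ε := by
  intro i ε hε
  obtain ⟨f, -, hfmono, hiter, hfcontr⟩ := hd09 i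
  have hf : MonotoneOn f (Ici 0) := fun s hs _ _ hst => hfmono s _ hs hst
  have hDnn : ∀ x y, 0 ≤ D i x y := fun x y => by
    linarith [hDtri i x y x, hD0 i x, hDsymm i y x]
  have hmem : ∀ n, T^[n] u ∈ Y := fun n => (MapsTo.iterate hTY n) hu
  have hmono := monotone_iterate_of_monotoneOn hTY hTincr hu huT
  have hcontr : ∀ k l, k ≤ l → D i (T^[k + 1] u) (T^[l + 1] u) ≤ f (D i (T^[k] u) (T^[l] u)) := by
    intro k l hkl
    simp only [Function.iterate_succ_apply']
    exact hfcontr _ (hmem k) _ (hmem l) (hmono hkl)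
  have hsteps : Tendsto (fun n => D i (T^[n] u) (T^[n + 1] u)) atTop (𝓝 0) :=
    tendsto_zero_of_le_apply_of_tendsto_iterate_zero hf hiter (fun n => hDnn _ _)
      fun n => hcontr n (n + 1) n.le_succ
  have hgap : 0 < ε - f ε := sub_pos.2 (lt_self_of_tendsto_iterate_zero hf hε (hiter ε hε))
  obtain ⟨m, hm⟩ := ((tendsto_order.1 hsteps).2 _ hgap).exists
  exact ⟨m, dist_le_of_step_le_sub (x := fun n => T^[n] u) (hD0 i) hDnn (hDtri i) hf hcontr hε.le hm.le⟩

/-- Under a Matkowski-type contractive condition on each pseudometric `d_i`,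
the orbit of any point `u` with `u ≤ Tu` is `D`-Cauchy. -/
theorem orbit_DCauchy_of_matkowski {X : Type*} [PartialOrder X] [Nonempty X]
    (D : ℕ → X → X → ℝ)
    (hD0 : ∀ i (x : X), D i x x = 0)
    (hDsymm : ∀ i (x y : X), D i x y = D i y x)
    (hDtri : ∀ i (x y z : X), D i x z ≤ D i x y + D i y z)
    (Y : Set X)
    (T : X → X) (hTY : ∀ x ∈ Y, T x ∈ Y)
    (hTincr : ∀ x ∈ Y, ∀ y ∈ Y, x ≤ y → T x ≤ T y)
    (u : X) (hu : u ∈ Y) (huT : u ≤ T u)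
    (hd09 : ∀ i : ℕ, ∃ f : ℝ → ℝ,
      (∀ t : ℝ, 0 ≤ t → 0 ≤ f t) ∧
      (∀ s t : ℝ, 0 ≤ s → s ≤ t → f s ≤ f t) ∧
      (∀ t : ℝ, 0 < t → Tendsto (fun n => f^[n] t) atTop (𝓝 0)) ∧
      (∀ x ∈ Y, ∀ y ∈ Y, x ≤ y → D i (T x) (T y) ≤ f (D i x y))) :
    ∀ i : ℕ, ∀ ε : ℝ, 0 < ε → ∃ m : ℕ, ∀ n : ℕ, D i (T^[m] u) (T^[m + n] u) ≤ ε :=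
  orbit_DCauchy_of_matkowski_general D hD0 hDsymm hDtri Y T hTY hTincr u hu huT hd09
end

section
/- (Matkowski) Let f : [0,∞) → [0,∞) be increasing (t ≤ s implies f(t) ≤ f(s)) and satisfy f^n(t) → 0 as n → ∞ for every t > 0, where f^n is the n-th iterate of f. Then f(t) < t for every t > 0 (and consequently f(0) = 0). -/
open Filter Topology Set

theorem MonotoneOn.le_iterate_of_le_map {α : Type*} [Preorder α] {f : α → α} {a : α}
    (hf : MonotoneOn f (Ici a)) (ha : a ≤ f a) (n : ℕ) : a ≤ f^[n] a := by
  induction n with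
  | zero => exact le_rfl
  | succ n ih =>
    rw [Function.iterate_succ_apply']
    exact ha.trans (hf self_mem_Ici ih ih)

theorem MonotoneOn.map_lt_of_tendsto_iterate {α : Type*} [LinearOrder α] [TopologicalSpace α]
    [OrderClosedTopology α] {f : α → α} {a b : α} (hf : MonotoneOn f (Ici a))
    (hlim : Tendsto (fun n => f^[n] a) atTop (𝓝 b)) (hba : b < a) : f a < a := by
  by_contra! ha
  exact hba.not_ge (ge_of_tendsto hlim (Eventually.of_forall (hf.le_iterate_of_le_map ha)))

/-- Matkowski's lemma: an increasing selfmap `f` of `[0,∞)` whose iterates tend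
to `0` at every `t > 0` satisfies `f(t) < t` for all `t > 0`, and `f(0) = 0`. -/
theorem matkowski_lemma (f : ℝ → ℝ)
    (hmaps : ∀ t : ℝ, 0 ≤ t → 0 ≤ f t)
    (hmono : ∀ s t : ℝ, 0 ≤ s → s ≤ t → f s ≤ f t)
    (hiter : ∀ t : ℝ, 0 < t → Tendsto (fun n => f^[n] t) atTop (𝓝 0)) :
    (∀ t : ℝ, 0 < t → f t < t) ∧ f 0 = 0 := by
  have hmonoOn : MonotoneOn f (Ici 0) := fun s hs t _ hst => hmono s t hs hst
  have hlt : ∀ t : ℝ, 0 < t → f t < t := fun t ht =>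
    (hmonoOn.mono (Ici_subset_Ici.2 ht.le)).map_lt_of_tendsto_iterate (hiter t ht) ht
  refine ⟨hlt, le_antisymm ?_ (hmaps 0 le_rfl)⟩
  by_contra! hf0
  exact (hlt (f 0) hf0).not_ge (hmono 0 (f 0) le_rfl hf0.le)
end
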